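/- Let e be a vector in ℝⁿ whose entries are i.i.d. Gaussian with mean 0 and standard deviation σ > 0. Then for any ε with 0 < ε < 1, the probability that ‖e‖² ≤ σ²·n/(1-ε) is at least 1 - exp(-ε²n/4). -/

import Mathlib

/-!
Chernoff's method. For `2 t σ² < 1` the Gaussian integral gives `E[exp (t eᵢ²)] = (1 - 2 t σ²)^(-1/2)`,
so by independence `P(‖e‖² ≥ c) ≤ exp (-t c) (1 - 2 t σ²)^(-n/2)`. At `c = σ² n / (1 - ε)` the
optimal choice `t = ε / (2 σ²)` makes this `(exp (-ε / (2 (1 - ε))) / √(1 - ε))ⁿ`, and the factor in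
brackets is at most `exp (-ε² / 4)` by the second-order bound `1 + z + z² / 2 ≤ exp z`.
-/

open MeasureTheory ProbabilityTheory Real
open scoped NNReal

lemma integral_exp_mul_sq_gaussianReal {v : ℝ≥0} {t : ℝ} (ht : 2 * t * v < 1) :
    ∫ x, exp (t * x ^ 2) ∂gaussianReal 0 v = (√(1 - 2 * t * v))⁻¹ := by
  rcases eq_or_ne v 0 with rfl | hv
  · simp [gaussianReal_zero_var]
  have h1 : 0 < 1 - 2 * t * v := by linarith
  set b := (1 - 2 * t * v) / (2 * v) with hb
  have hdensity : ∀ x : ℝ, gaussianPDFReal 0 v x • exp (t * x ^ 2)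
      = (√(2 * π * v))⁻¹ * exp (-b * x ^ 2) := by
    intro x
    rw [gaussianPDFReal, smul_eq_mul, mul_assoc, ← exp_add]
    congr 2
    rw [hb]
    field_simp
    ring
  rw [integral_gaussianReal_eq_integral_smul hv]
  simp_rw [hdensity]
  rw [integral_const_mul, integral_gaussian, hb,
    show π / ((1 - 2 * t * v) / (2 * v)) = 2 * π * v / (1 - 2 * t * v) by field_simp,
    sqrt_div' _ h1.le]
  field_simp

lemma integrable_exp_mul_sq_gaussianReal {v : ℝ≥0} {t : ℝ} (ht : 2 * t * v < 1) :
    Integrable (fun x => exp (t * x ^ 2)) (gaussianReal 0 v) := by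
  refine .of_integral_ne_zero ?_
  rw [integral_exp_mul_sq_gaussianReal ht]
  exact inv_ne_zero (sqrt_pos.2 (by linarith)).ne'

lemma inv_one_sub_le_exp {ε : ℝ} (hε0 : 0 ≤ ε) (hε1 : ε < 1) :
    (1 - ε)⁻¹ ≤ exp (ε / (1 - ε) - ε ^ 2 / 2) := by
  have h1 : 0 < 1 - ε := by linarith
  set z := ε / (1 - ε) - ε ^ 2 / 2 with hz
  have hεz : ε ≤ z := by
    have : ε + ε ^ 2 ≤ ε / (1 - ε) := by rw [le_div_iff₀ h1]; nlinarith
    nlinarith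
  -- `(1 - ε) (1 + z)` falls short of `1` by `(1 - ε) ε² / 2`, which the term `z² / 2` makes up.
  have hquad : (1 - ε) * (1 + z + z ^ 2 / 2) = 1 + (1 - ε) * (z ^ 2 - ε ^ 2) / 2 := by
    rw [hz]; field_simp; ring
  refine (inv_le_iff_one_le_mul₀' h1).2 ?_
  calc 1 ≤ (1 - ε) * (1 + z + z ^ 2 / 2) := by rw [hquad]; nlinarith
    _ ≤ (1 - ε) * exp z := by gcongr; exact quadratic_le_exp_of_nonneg (hε0.trans hεz)

lemma inv_sqrt_one_sub_le_exp {ε : ℝ} (hε0 : 0 ≤ ε) (hε1 : ε < 1) :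
    (√(1 - ε))⁻¹ ≤ exp (ε / (2 * (1 - ε)) - ε ^ 2 / 4) := by
  calc (√(1 - ε))⁻¹ = √((1 - ε)⁻¹) := (sqrt_inv _).symm
    _ ≤ √(exp (ε / (1 - ε) - ε ^ 2 / 2)) := sqrt_le_sqrt (inv_one_sub_le_exp hε0 hε1)
    _ = exp (ε / (2 * (1 - ε)) - ε ^ 2 / 4) := by
      rw [sqrt_eq_iff_mul_self_eq_of_pos (exp_pos _), ← exp_add]
      congr 1
      field_simp
      ring

section

variable {Ω : Type*} [MeasurableSpace Ω] {μ : Measure Ω} {v : ℝ≥0} {t : ℝ}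

lemma mgf_sq_of_map_eq_gaussianReal {X : Ω → ℝ} (hX : AEMeasurable X μ)
    (hlaw : μ.map X = gaussianReal 0 v) (ht : 2 * t * v < 1) :
    mgf (fun ω => X ω ^ 2) μ t = (√(1 - 2 * t * v))⁻¹ :=
  calc mgf (fun ω => X ω ^ 2) μ t = ∫ x, exp (t * x ^ 2) ∂μ.map X :=
        (integral_map (f := fun x => exp (t * x ^ 2)) hX (by fun_prop)).symm
    _ = (√(1 - 2 * t * v))⁻¹ := by rw [hlaw, integral_exp_mul_sq_gaussianReal ht]

lemma integrable_exp_mul_sq_of_map_eq_gaussianReal {X : Ω → ℝ} (hX : AEMeasurable X μ)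
    (hlaw : μ.map X = gaussianReal 0 v) (ht : 2 * t * v < 1) :
    Integrable (fun ω => exp (t * X ω ^ 2)) μ := by
  have h := integrable_exp_mul_sq_gaussianReal ht
  rwa [← hlaw, integrable_map_measure (by fun_prop) hX] at h

lemma measureReal_sum_sq_ge_le {ι : Type*} [Fintype ι] {X : ι → Ω → ℝ}
    (hX : ∀ i, Measurable (X i)) (hindep : iIndepFun X μ)
    (hlaw : ∀ i, μ.map (X i) = gaussianReal 0 v) (ht0 : 0 ≤ t) (ht : 2 * t * v < 1) (c : ℝ) :
    μ.real {ω | c ≤ ∑ i, X i ω ^ 2} ≤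
      exp (-t * c) * (√(1 - 2 * t * v))⁻¹ ^ Fintype.card ι := by
  have := hindep.isProbabilityMeasure
  have hX2 : ∀ i, Measurable fun ω => X i ω ^ 2 := fun i => (hX i).pow_const 2
  have hindep2 : iIndepFun (fun i ω => X i ω ^ 2) μ :=
    hindep.comp (fun _ x => x ^ 2) fun _ => measurable_id.pow_const 2
  have hint := hindep2.integrable_exp_mul_sum (t := t) (s := .univ) hX2 fun i _ =>
    integrable_exp_mul_sq_of_map_eq_gaussianReal (hX i).aemeasurable (hlaw i) ht
  have hchernoff := measure_ge_le_exp_mul_mgf c ht0 hint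
  rw [hindep2.mgf_sum hX2] at hchernoff
  simpa [mgf_sq_of_map_eq_gaussianReal (hX _).aemeasurable (hlaw _) ht] using hchernoff

lemma ofReal_one_sub_le_measure_le [IsProbabilityMeasure μ] {Y : Ω → ℝ} (hY : AEMeasurable Y μ)
    {b c : ℝ} (h : μ.real {ω | c ≤ Y ω} ≤ b) :
    ENNReal.ofReal (1 - b) ≤ μ {ω | Y ω ≤ c} := by
  have hcompl : {ω | Y ω ≤ c} = {ω | c < Y ω}ᶜ := by ext; simp
  have hlt : μ.real {ω | c < Y ω} ≤ μ.real {ω | c ≤ Y ω} :=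
    measureReal_mono fun ω (hω : c < Y ω) => hω.le
  rw [← ofReal_measureReal, hcompl,
    probReal_compl_eq_one_sub₀ (nullMeasurableSet_lt aemeasurable_const hY)]
  exact ENNReal.ofReal_le_ofReal (by linarith)

end

/-- If `e` is a vector in `ℝⁿ` with i.i.d. Gaussian entries of mean `0` and
standard deviation `σ`, then `‖e‖² ≤ σ² n / (1 - ε)` with probability at least
`1 - exp (-ε² n / 4)`. -/
theorem gaussian_norm_sq_bound
    {Ω : Type*} [MeasureSpace Ω] [IsProbabilityMeasure (ℙ : Measure Ω)]
    (n : ℕ) (σ : ℝ) (hσ : 0 < σ) (e : Fin n → Ω → ℝ)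
    (hmeas : ∀ i, Measurable (e i))
    (hindep : iIndepFun e ℙ)
    (hlaw : ∀ i, Measure.map (e i) ℙ = gaussianReal 0 ⟨σ ^ 2, sq_nonneg σ⟩)
    (ε : ℝ) (hε0 : 0 < ε) (hε1 : ε < 1) :
    ℙ {ω | ∑ i, (e i ω) ^ 2 ≤ σ ^ 2 * n / (1 - ε)} ≥
      ENNReal.ofReal (1 - Real.exp (-(ε ^ 2) * n / 4)) := by
  set t := ε / (2 * σ ^ 2)
  have h2t : 2 * t * NNReal.toReal ⟨σ ^ 2, sq_nonneg σ⟩ = ε := by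
    change 2 * (ε / (2 * σ ^ 2)) * σ ^ 2 = ε; field_simp
  have hchernoff := measureReal_sum_sq_ge_le (t := t) hmeas hindep hlaw (by positivity)
    (h2t ▸ hε1) (σ ^ 2 * n / (1 - ε))
  rw [h2t, Fintype.card_fin] at hchernoff
  refine ofReal_one_sub_le_measure_le (by fun_prop) (hchernoff.trans ?_)
  calc exp (-t * (σ ^ 2 * n / (1 - ε))) * (√(1 - ε))⁻¹ ^ n
      = (exp (-(ε / (2 * (1 - ε)))) * (√(1 - ε))⁻¹) ^ n := by
        rw [mul_pow, ← exp_nat_mul]; congr 2; unfold t; field_simp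
    _ ≤ (exp (-(ε / (2 * (1 - ε)))) * exp (ε / (2 * (1 - ε)) - ε ^ 2 / 4)) ^ n := by
        gcongr; exact inv_sqrt_one_sub_le_exp hε0.le hε1
    _ = exp (-(ε ^ 2) * n / 4) := by
        rw [← exp_add, ← exp_nat_mul]; congr 1; ring
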